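/- For t ≥ 0, the split graph SP^t satisfies λ₂(SP^t) ≤ λ₂(SP^{t+1}), i.e., the sequence (λ₂(SP^t)) is non-decreasing in t. -/

import Mathlib

open Real

/-- The `k`-th largest eigenvalue (1-indexed, with multiplicity) of a real
symmetric matrix; junk value `0` if the matrix is not Hermitian. -/
noncomputable def kthLargestEig {V : Type*} [Fintype V] [DecidableEq V]
    (k : ℕ) (A : Matrix V V ℝ) : ℝ :=
  if h : A.IsHermitian then
    ((Finset.univ.val.map h.eigenvalues).sort (· ≤ ·)).getD (Fintype.card V - k) 0
  else 0

/-- The second largest eigenvalue of a real symmetric matrix. -/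
noncomputable def lambda2 {V : Type*} [Fintype V] [DecidableEq V]
    (A : Matrix V V ℝ) : ℝ := kthLargestEig 2 A

/-- The distance matrix of a graph (entries are graph distances, as reals). -/
noncomputable def distMatrix {V : Type*} [Fintype V] (G : SimpleGraph V) :
    Matrix V V ℝ := fun u v => (G.dist u v : ℝ)

/-- A graph is chordal if every cycle of length at least 4 has a chord, i.e. an
edge of the graph joining two vertices of the cycle that is not a cycle edge. -/
def SimpleGraph.Chordal {V : Type*} (G : SimpleGraph V) : Prop :=
  ∀ (u : V) (w : G.Walk u u), w.IsCycle → 4 ≤ w.length →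
    ∃ x y, x ∈ w.support ∧ y ∈ w.support ∧ G.Adj x y ∧ s(x, y) ∉ w.edges

/-- The split graph `SP^t`: a clique `K₄` on vertices `0 = u, 1 = v, 2, 3`,
a vertex `4 = w` adjacent exactly to `u` and `v`, and `t` pendant vertices
`5, …, t+4` each adjacent only to `u`. -/
def SP (t : ℕ) : SimpleGraph (Fin (t + 5)) where
  Adj x y := x ≠ y ∧
    (((x : ℕ) < 4 ∧ (y : ℕ) < 4) ∨
      ((x : ℕ) = 4 ∧ (y : ℕ) < 2) ∨ ((y : ℕ) = 4 ∧ (x : ℕ) < 2) ∨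
      ((x : ℕ) = 0 ∧ 5 ≤ (y : ℕ)) ∨ ((y : ℕ) = 0 ∧ 5 ≤ (x : ℕ)))
  symm := by
    constructor
    intro x y h
    exact ⟨h.1.symm, by tauto⟩
  loopless := by
    constructor
    intro x h
    exact h.1 rfl

/-!
The distance matrix of `SP^t` is the principal submatrix of that of `SP^{t+1}` obtained by
deleting the last pendant vertex: both graphs have the universal vertex `u`, so every distance is
`0`, `1` or `2` and is determined by adjacency, which the deletion preserves.

The claim is then the case `k = 2` of Cauchy interlacing, `λₖ(Pᴴ B P) ≤ λₖ(B)` whenever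
`Pᴴ P = 1`, proved by a dimension count: asking that `x` have no component along the eigenvectors
of `Pᴴ B P` after the `k`-th, and `P x` none along those of `B` before the `k`-th, imposes `m - 1`
linear conditions on an `m`-dimensional space. A nonzero solution has Rayleigh quotient at least
`λₖ(Pᴴ B P)` and at most `λₖ(B)`.
-/

open Module Matrix

namespace LinearMap.IsSymmetric

variable {𝕜 E : Type*} [RCLike 𝕜] [NormedAddCommGroup E] [InnerProductSpace 𝕜 E]
  [FiniteDimensional 𝕜 E] {T : E →ₗ[𝕜] E} (hT : T.IsSymmetric) {n : ℕ} (hn : finrank 𝕜 E = n)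

theorem re_inner_apply_self_eq_sum (x : E) :
    RCLike.re (inner 𝕜 (T x) x) =
      ∑ i, hT.eigenvalues hn i * ‖(hT.eigenvectorBasis hn).repr x i‖ ^ 2 := by
  rw [← (hT.eigenvectorBasis hn).repr.inner_map_map, PiLp.inner_apply, map_sum]
  refine Finset.sum_congr rfl fun i _ => ?_
  rw [hT.eigenvectorBasis_apply_self_apply, RCLike.inner_apply, map_mul (starRingEnd 𝕜),
    RCLike.conj_ofReal, mul_left_comm, RCLike.re_ofReal_mul, RCLike.mul_conj,
    ← RCLike.ofReal_pow, RCLike.ofReal_re]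

theorem norm_sq_eq_sum_repr (x : E) :
    ‖x‖ ^ 2 = ∑ i, ‖(hT.eigenvectorBasis hn).repr x i‖ ^ 2 := by
  rw [← (hT.eigenvectorBasis hn).repr.norm_map, EuclideanSpace.norm_sq_eq]

theorem re_inner_apply_self_le {k : Fin n} {x : E}
    (hx : ∀ i < k, (hT.eigenvectorBasis hn).repr x i = 0) :
    RCLike.re (inner 𝕜 (T x) x) ≤ hT.eigenvalues hn k * ‖x‖ ^ 2 := by
  rw [hT.re_inner_apply_self_eq_sum hn, hT.norm_sq_eq_sum_repr hn, Finset.mul_sum]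
  refine Finset.sum_le_sum fun i _ => ?_
  rcases lt_or_ge i k with hik | hki
  · simp [hx i hik]
  · exact mul_le_mul_of_nonneg_right (hT.eigenvalues_antitone hn hki) (by positivity)

theorem le_re_inner_apply_self {k : Fin n} {x : E}
    (hx : ∀ i, k < i → (hT.eigenvectorBasis hn).repr x i = 0) :
    hT.eigenvalues hn k * ‖x‖ ^ 2 ≤ RCLike.re (inner 𝕜 (T x) x) := by
  rw [hT.re_inner_apply_self_eq_sum hn, hT.norm_sq_eq_sum_repr hn, Finset.mul_sum]
  refine Finset.sum_le_sum fun i _ => ?_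
  rcases le_or_gt i k with hik | hki
  · exact mul_le_mul_of_nonneg_right (hT.eigenvalues_antitone hn hik) (by positivity)
  · simp [hx i hki]

theorem eigenvalues_le_of_compression {F : Type*} [NormedAddCommGroup F]
    [InnerProductSpace 𝕜 F] [FiniteDimensional 𝕜 F] {S : F →ₗ[𝕜] F} (hS : S.IsSymmetric)
    {m : ℕ} (hm : finrank 𝕜 F = m) (J : F →ₗᵢ[𝕜] E)
    (hJ : ∀ x, inner 𝕜 (T (J x)) (J x) = inner 𝕜 (S x) x) {k : Fin m} {k' : Fin n}
    (hk : (k : ℕ) = k') : hS.eigenvalues hm k ≤ hT.eigenvalues hn k' := by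
  let C : F →ₗ[𝕜] ({i : Fin m // i ≠ k} → 𝕜) := LinearMap.pi fun i =>
    if hi : (i : ℕ) < k then
      (EuclideanSpace.proj (⟨i, by omega⟩ : Fin n)).toLinearMap ∘ₗ
        (hT.eigenvectorBasis hn).repr.toLinearMap ∘ₗ J.toLinearMap
    else (EuclideanSpace.proj (i : Fin m)).toLinearMap ∘ₗ (hS.eigenvectorBasis hm).repr.toLinearMap
  have hC : finrank 𝕜 ({i : Fin m // i ≠ k} → 𝕜) < finrank 𝕜 F := by
    have := k.isLt
    simp only [finrank_fintype_fun_eq_card, Fintype.card_subtype_compl, Fintype.card_fin,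
      Fintype.card_unique, hm]
    omega
  obtain ⟨x, hxC, hx⟩ :=
    Submodule.exists_mem_ne_zero_of_ne_bot (LinearMap.ker_ne_bot_of_finrank_lt hC)
  have hCx : ∀ i, C x i = 0 := fun i => congrFun (LinearMap.mem_ker.mp hxC) i
  have hS_coord : ∀ i, k < i → (hS.eigenvectorBasis hm).repr x i = 0 := by
    intro i hi
    have := hCx ⟨i, hi.ne'⟩
    rwa [LinearMap.pi_apply, dif_neg (show ¬ (i : ℕ) < k by omega)] at this
  have hT_coord : ∀ j < k', (hT.eigenvectorBasis hn).repr (J x) j = 0 := by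
    intro j hj
    have hjk : (j : ℕ) < k := by omega
    have := hCx ⟨⟨j, by omega⟩, fun h => by simp [← h] at hjk⟩
    rwa [LinearMap.pi_apply, dif_pos hjk] at this
  refine le_of_mul_le_mul_right ?_ (by positivity : 0 < ‖x‖ ^ 2)
  calc hS.eigenvalues hm k * ‖x‖ ^ 2
      ≤ RCLike.re (inner 𝕜 (S x) x) := hS.le_re_inner_apply_self hm hS_coord
    _ = RCLike.re (inner 𝕜 (T (J x)) (J x)) := by rw [hJ]
    _ ≤ hT.eigenvalues hn k' * ‖J x‖ ^ 2 := hT.re_inner_apply_self_le hn hT_coord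
    _ = hT.eigenvalues hn k' * ‖x‖ ^ 2 := by rw [J.norm_map]

end LinearMap.IsSymmetric

theorem Matrix.inner_toEuclideanLin_right {𝕜 ι κ : Type*} [RCLike 𝕜] [Fintype ι] [DecidableEq ι]
    [Fintype κ] [DecidableEq κ] (M : Matrix ι κ 𝕜) (x : EuclideanSpace 𝕜 ι)
    (y : EuclideanSpace 𝕜 κ) :
    inner 𝕜 x (toEuclideanLin M y) = inner 𝕜 (toEuclideanLin Mᴴ x) y := by
  rw [toEuclideanLin_conjTranspose_eq_adjoint, LinearMap.adjoint_inner_left]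

namespace Matrix.IsHermitian

variable {𝕜 ι κ : Type*} [RCLike 𝕜] [Fintype ι] [DecidableEq ι] [Fintype κ] [DecidableEq κ]

theorem eigenvalues₀_le_of_eq_conjTranspose_mul_mul {A : Matrix κ κ 𝕜} (hA : A.IsHermitian)
    {B : Matrix ι ι 𝕜} (hB : B.IsHermitian) {P : Matrix ι κ 𝕜} (hP : Pᴴ * P = 1)
    (hAB : A = Pᴴ * B * P) {k : Fin (Fintype.card κ)} {k' : Fin (Fintype.card ι)}
    (hk : (k : ℕ) = k') : hA.eigenvalues₀ k ≤ hB.eigenvalues₀ k' := by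
  let J := (toEuclideanLin P).isometryOfInner fun x y => by
    rw [inner_toEuclideanLin_right, ← LinearMap.comp_apply, ← toLpLin_mul_same, hP, toLpLin_one,
      LinearMap.id_apply]
  refine (isSymmetric_toEuclideanLin_iff.mpr hB).eigenvalues_le_of_compression
    finrank_euclideanSpace (isSymmetric_toEuclideanLin_iff.mpr hA) finrank_euclideanSpace J
    (fun x => ?_) hk
  change inner 𝕜 (toEuclideanLin B (toEuclideanLin P x)) (toEuclideanLin P x) = _
  rw [inner_toEuclideanLin_right, ← LinearMap.comp_apply, ← LinearMap.comp_apply,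
    ← toLpLin_mul_same, ← toLpLin_mul_same, hAB]

theorem eigenvalues₀_submatrix_le {B : Matrix ι ι 𝕜} (hB : B.IsHermitian) {f : κ → ι}
    (hf : f.Injective) {k : Fin (Fintype.card κ)} {k' : Fin (Fintype.card ι)}
    (hk : (k : ℕ) = k') : (hB.submatrix f).eigenvalues₀ k ≤ hB.eigenvalues₀ k' := by
  let P : Matrix ι κ 𝕜 := (1 : Matrix ι ι 𝕜).submatrix id f
  refine eigenvalues₀_le_of_eq_conjTranspose_mul_mul _ hB (P := P) ?_ ?_ hk
  · ext a b
    simp [P, mul_apply, one_apply, hf.eq_iff]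
  · ext a b
    simp [P, mul_apply, one_apply]

end Matrix.IsHermitian

theorem kthLargestEig_eq_eigenvalues₀ {V : Type*} [Fintype V] [DecidableEq V]
    {A : Matrix V V ℝ} (hA : A.IsHermitian) (k : Fin (Fintype.card V)) :
    kthLargestEig (k + 1) A = hA.eigenvalues₀ k := by
  have hmap : Finset.univ.val.map hA.eigenvalues = Finset.univ.val.map hA.eigenvalues₀ := by
    unfold IsHermitian.eigenvalues
    simp only [← Function.comp_apply (f := hA.eigenvalues₀), ← Multiset.map_map]
    simp
  have hsort : (Finset.univ.val.map hA.eigenvalues).sort (· ≤ ·) =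
      (List.ofFn hA.eigenvalues₀).reverse := by
    rw [hmap, Fin.univ_val_map, ← Multiset.coe_reverse, Multiset.coe_sort]
    apply List.mergeSort_of_pairwise
    have := hA.eigenvalues₀_antitone.sortedGE_ofFn
    rw [List.sortedGE_iff_pairwise] at this
    simpa [List.pairwise_reverse] using this
  have hk := k.isLt
  have hlen : (List.ofFn hA.eigenvalues₀).reverse.length = Fintype.card V := by simp
  rw [kthLargestEig, dif_pos hA, hsort, List.getD_eq_getElem _ _ (by omega),
    List.getElem_reverse, List.getElem_ofFn]
  congr
  simp only [List.length_ofFn]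
  omega

theorem kthLargestEig_submatrix_le {ι κ : Type*} [Fintype ι] [DecidableEq ι] [Fintype κ]
    [DecidableEq κ] {B : Matrix ι ι ℝ} (hB : B.IsHermitian) {f : κ → ι} (hf : f.Injective)
    (k : Fin (Fintype.card κ)) :
    kthLargestEig (k + 1) (B.submatrix f f) ≤ kthLargestEig (k + 1) B := by
  have hcard := Fintype.card_le_of_injective f hf
  rw [kthLargestEig_eq_eigenvalues₀ (hB.submatrix f), ← Fin.val_castLE hcard k,
    kthLargestEig_eq_eigenvalues₀ hB]
  exact hB.eigenvalues₀_submatrix_le hf rfl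

theorem distMatrix_isHermitian {V : Type*} [Fintype V] (G : SimpleGraph V) :
    (distMatrix G).IsHermitian := by
  ext i j
  simp [distMatrix, SimpleGraph.dist_comm]

theorem SimpleGraph.dist_eq_two_of_not_adj {V : Type*} {G : SimpleGraph V} {c x y : V}
    (hc : ∀ v, v ≠ c → G.Adj c v) (hxy : x ≠ y) (h : ¬ G.Adj x y) : G.dist x y = 2 := by
  have hxc : x ≠ c := by rintro rfl; exact h (hc y hxy.symm)
  have hyc : y ≠ c := by rintro rfl; exact h (hc x hxy).symm
  let w : G.Walk x y := .cons (hc x hxc).symm (.cons (hc y hyc) .nil)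
  have hle : G.dist x y ≤ 2 := SimpleGraph.dist_le w
  have hne0 : G.dist x y ≠ 0 := fun h0 =>
    (SimpleGraph.dist_eq_zero_iff_eq_or_not_reachable.mp h0).elim hxy fun hr => hr ⟨w⟩
  have hne1 : G.dist x y ≠ 1 := fun h1 => h (SimpleGraph.dist_eq_one_iff_adj.mp h1)
  omega

theorem SP_zero_adj {t : ℕ} (y : Fin (t + 5)) (hy : y ≠ 0) : (SP t).Adj 0 y := by
  have : (y : ℕ) ≠ 0 := Fin.val_ne_zero_iff.mpr hy
  exact ⟨hy.symm, by rw [Fin.val_zero]; omega⟩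

theorem SP_adj_castSucc {t : ℕ} (x y : Fin (t + 5)) :
    (SP (t + 1)).Adj x.castSucc y.castSucc ↔ (SP t).Adj x y := by
  simp [SP]

theorem SP_dist_castSucc {t : ℕ} (x y : Fin (t + 5)) :
    (SP (t + 1)).dist x.castSucc y.castSucc = (SP t).dist x y := by
  by_cases hxy : x = y
  · simp [hxy]
  by_cases hadj : (SP t).Adj x y
  · rw [SimpleGraph.dist_eq_one_iff_adj.mpr hadj,
      SimpleGraph.dist_eq_one_iff_adj.mpr ((SP_adj_castSucc x y).mpr hadj)]
  · rw [SimpleGraph.dist_eq_two_of_not_adj SP_zero_adj hxy hadj,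
      SimpleGraph.dist_eq_two_of_not_adj SP_zero_adj (by simpa using hxy)
        (by rwa [SP_adj_castSucc])]

theorem distMatrix_SP_submatrix (t : ℕ) :
    (distMatrix (SP (t + 1))).submatrix Fin.castSucc Fin.castSucc = distMatrix (SP t) := by
  ext x y
  simp [distMatrix, SP_dist_castSucc]

theorem lambda2_SP_monotone (t : ℕ) :
    lambda2 (distMatrix (SP t)) ≤ lambda2 (distMatrix (SP (t + 1))) := by
  rw [← distMatrix_SP_submatrix]
  exact kthLargestEig_submatrix_le (distMatrix_isHermitian _) (Fin.castSucc_injective _)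
    ⟨1, by simp⟩
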